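/- Let (L,∀) be a strong monadic NM-algebra and a, b ∈ L. Then ⟨a⟩_∀ ∩ ⟨b⟩_∀ = ⟨∀a ∨ ∀b⟩_∀. -/
import Mathlib


/-- An NM-algebra: a bounded lattice with a commutative monoid operation `odot`
(unit `⊤`) and a residuated implication `imp`, satisfying prelinearity, the weak
nilpotent minimum identity and involution of the negation `nneg x = imp x ⊥`. -/
class NMAlgebra (L : Type*) extends Lattice L, BoundedOrder L where
  odot : L → L → L
  imp : L → L → L
  odot_comm : ∀ x y : L, odot x y = odot y x
  odot_assoc : ∀ x y z : L, odot (odot x y) z = odot x (odot y z)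
  odot_top : ∀ x : L, odot x ⊤ = x
  residuation : ∀ x y z : L, odot x y ≤ z ↔ x ≤ imp y z
  prelinearity : ∀ x y : L, imp x y ⊔ imp y x = ⊤
  wnm : ∀ x y : L, imp (odot x y) ⊥ ⊔ imp (x ⊓ y) (odot x y) = ⊤
  involution : ∀ x : L, imp (imp x ⊥) ⊥ = x

namespace NMAlgebra

variable {L : Type*} [NMAlgebra L]

/-- Negation `¬x := x → 0`. -/
def nneg (x : L) : L := imp x ⊥

/-- `x ⊕ y := ¬x → y`. -/
def oplus (x y : L) : L := imp (nneg x) y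

/-- `n`-fold `⊙`-power, with `opow a 0 = ⊤`. -/
def opow (a : L) : ℕ → L
  | 0 => ⊤
  | n + 1 => odot a (opow a n)

/-- A universal quantifier on an NM-algebra: (U1)–(U4). -/
def IsUQ (q : L → L) : Prop :=
  (∀ x : L, q x ≤ x) ∧
  (∀ x y : L, q (imp (nneg x) (q y)) = imp (nneg (q x)) (q y)) ∧
  (∀ x y : L, q (imp (q x) y) = imp (q x) (q y)) ∧
  (∀ x y : L, q (x ⊔ q y) = q x ⊔ q y)

/-- A strong universal quantifier on an NM-algebra: (U1),(U2),(U3),(U4'). -/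
def IsStrongUQ (q : L → L) : Prop :=
  (∀ x : L, q x ≤ x) ∧
  (∀ x y : L, q (imp (nneg x) (q y)) = imp (nneg (q x)) (q y)) ∧
  (∀ x y : L, q (imp (q x) y) = imp (q x) (q y)) ∧
  (∀ x y : L, q (x ⊔ y) = q x ⊔ q y)

/-- A filter of an NM-algebra: nonempty, closed under `⊙` and upward closed. -/
def IsNMFilter (F : Set L) : Prop :=
  F.Nonempty ∧ (∀ x ∈ F, ∀ y ∈ F, odot x y ∈ F) ∧ ∀ x ∈ F, ∀ y : L, x ≤ y → y ∈ F

/-- A monadic filter of `(L, q)`: a filter closed under `q`. -/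
def IsMonadicFilter (q : L → L) (F : Set L) : Prop :=
  IsNMFilter F ∧ ∀ x ∈ F, q x ∈ F

/-- The smallest monadic filter containing `X`. -/
def genMF (q : L → L) (X : Set L) : Set L :=
  ⋂₀ {F : Set L | IsMonadicFilter q F ∧ X ⊆ F}

/-- The smallest filter containing `X`. -/
def genF (X : Set L) : Set L :=
  ⋂₀ {F : Set L | IsNMFilter F ∧ X ⊆ F}

/-- A filter of the subalgebra carried by `S ⊆ L`: a nonempty subset of `S`
closed under `⊙` and upward closed within `S`. -/
def IsFilterOn (S : Set L) (G : Set L) : Prop :=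
  G ⊆ S ∧ G.Nonempty ∧ (∀ x ∈ G, ∀ y ∈ G, odot x y ∈ G) ∧
    ∀ x ∈ G, ∀ y ∈ S, x ≤ y → y ∈ G

/-- A prime monadic filter: a proper monadic filter `P` such that
`F₁ ∩ F₂ ⊆ P` implies `F₁ ⊆ P` or `F₂ ⊆ P` for monadic filters `F₁, F₂`. -/
def IsPrimeMF (q : L → L) (P : Set L) : Prop :=
  IsMonadicFilter q P ∧ P ≠ Set.univ ∧
    ∀ F₁ F₂ : Set L, IsMonadicFilter q F₁ → IsMonadicFilter q F₂ →
      F₁ ∩ F₂ ⊆ P → F₁ ⊆ P ∨ F₂ ⊆ P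

/-- A prime filter: a proper filter `P` with `x ⊔ y ∈ P → x ∈ P ∨ y ∈ P`. -/
def IsPrimeF (P : Set L) : Prop :=
  IsNMFilter P ∧ P ≠ Set.univ ∧ ∀ x y : L, x ⊔ y ∈ P → x ∈ P ∨ y ∈ P

/-- A monadic congruence on `(L, q)`: an equivalence relation compatible with
`⊓`, `⊔`, `⊙`, `→` and with `q`. -/
def IsMonadicCong (q : L → L) (θ : L → L → Prop) : Prop :=
  Equivalence θ ∧
  (∀ a b c d : L, θ a b → θ c d → θ (a ⊓ c) (b ⊓ d)) ∧
  (∀ a b c d : L, θ a b → θ c d → θ (a ⊔ c) (b ⊔ d)) ∧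
  (∀ a b c d : L, θ a b → θ c d → θ (odot a c) (odot b d)) ∧
  (∀ a b c d : L, θ a b → θ c d → θ (imp a c) (imp b d)) ∧
  ∀ a b : L, θ a b → θ (q a) (q b)

end NMAlgebra

open NMAlgebra

section Aux

variable {L : Type*} [NMAlgebra L]

lemma aux_top_odot (x : L) : odot ⊤ x = x := by rw [odot_comm, odot_top]

lemma aux_odot_mono {x x' y y' : L} (hx : x ≤ x') (hy : y ≤ y') :
    odot x y ≤ odot x' y' := by
  have h1 : odot x y ≤ odot x' y :=
    (residuation x y (odot x' y)).mpr (hx.trans ((residuation x' y (odot x' y)).mp le_rfl))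
  have h2 : odot x' y ≤ odot x' y' := by
    rw [odot_comm x' y, odot_comm x' y']
    exact (residuation y x' (odot y' x')).mpr
      (hy.trans ((residuation y' x' (odot y' x')).mp le_rfl))
  exact h1.trans h2

lemma aux_odot_le_left (x y : L) : odot x y ≤ x := by
  calc odot x y ≤ odot x ⊤ := aux_odot_mono le_rfl le_top
    _ = x := odot_top x

lemma aux_odot_le_right (x y : L) : odot x y ≤ y := by
  rw [odot_comm]; exact aux_odot_le_left y x

lemma aux_imp_self (x : L) : imp x x = ⊤ :=
  le_antisymm le_top ((residuation ⊤ x x).mp (by rw [aux_top_odot]))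

lemma aux_imp_top (x : L) : imp x ⊤ = ⊤ :=
  le_antisymm le_top ((residuation ⊤ x ⊤).mp le_top)

lemma aux_top_imp (z : L) : imp ⊤ z = z := by
  apply le_antisymm
  · have := (residuation (imp ⊤ z) ⊤ z).mpr le_rfl
    rwa [odot_top] at this
  · exact (residuation z ⊤ z).mp (by rw [odot_top])

lemma aux_nneg_bot : (nneg (⊥ : L)) = ⊤ := by
  apply le_antisymm le_top
  exact (residuation ⊤ ⊥ ⊥).mp (by rw [aux_top_odot])

lemma aux_odot_sup (x y z : L) : odot (x ⊔ y) z = odot x z ⊔ odot y z := by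
  apply le_antisymm
  · exact (residuation _ _ _).mpr (sup_le ((residuation _ _ _).mp le_sup_left)
      ((residuation _ _ _).mp le_sup_right))
  · exact sup_le (aux_odot_mono le_sup_left le_rfl) (aux_odot_mono le_sup_right le_rfl)

variable {q : L → L}

lemma aux_q_mono (hq : IsStrongUQ q) {x y : L} (h : x ≤ y) : q x ≤ q y := by
  have := hq.2.2.2 x y
  rw [sup_eq_right.mpr h] at this
  rw [this]; exact le_sup_left

lemma aux_q_top (hq : IsStrongUQ q) : q (⊤ : L) = ⊤ := by
  have h := hq.2.2.1 (⊤ : L) (⊤ : L)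
  rwa [aux_imp_top, aux_imp_self] at h

lemma aux_q_bot (hq : IsStrongUQ q) : q (⊥ : L) = ⊥ := le_antisymm (hq.1 ⊥) bot_le

lemma aux_q_idem (hq : IsStrongUQ q) (x : L) : q (q x) = q x := by
  have h := hq.2.1 (⊥ : L) x
  rwa [aux_q_bot hq, aux_nneg_bot, aux_top_imp] at h

lemma aux_q_odot_le (hq : IsStrongUQ q) (x y : L) : odot (q x) (q y) ≤ q (odot (q x) (q y)) := by
  have h1 : q x ≤ imp (q y) (odot (q x) (q y)) := (residuation _ _ _).mp le_rfl
  have h2 : q (q x) ≤ q (imp (q y) (odot (q x) (q y))) := aux_q_mono hq h1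
  rw [aux_q_idem hq, hq.2.2.1 y (odot (q x) (q y))] at h2
  exact (residuation _ _ _).mpr h2

lemma aux_q_opow (hq : IsStrongUQ q) (a : L) : ∀ n, q (opow (q a) n) = opow (q a) n := by
  intro n
  induction n with
  | zero => simpa [opow] using aux_q_top (q := q) hq
  | succ n ih =>
    apply le_antisymm (hq.1 _)
    have h := aux_q_odot_le hq a (opow (q a) n)
    rw [ih] at h
    exact h

lemma aux_opow_mono_base {c d : L} (h : c ≤ d) : ∀ n, opow c n ≤ opow d n := by
  intro n
  induction n with
  | zero => exact le_rfl
  | succ n ih => exact aux_odot_mono h ih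

lemma aux_sup_odot (z x y : L) : odot z (x ⊔ y) = odot z x ⊔ odot z y := by
  rw [odot_comm z (x ⊔ y), aux_odot_sup, odot_comm x z, odot_comm y z]

lemma aux_opow_add (c : L) (n m : ℕ) :
    opow c (n + m) = odot (opow c n) (opow c m) := by
  induction n with
  | zero => simp [opow, aux_top_odot]
  | succ n ih =>
    have e : (n + 1) + m = (n + m) + 1 := by omega
    rw [e]
    show odot c (opow c (n + m)) = odot (odot c (opow c n)) (opow c m)
    rw [ih, ← odot_assoc]

lemma aux_sup_opow (c d : L) : ∀ n m, opow (c ⊔ d) (n + m) ≤ opow c n ⊔ opow d m := by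
  intro n
  induction n with
  | zero => intro m; simp [opow]
  | succ n ihn =>
    intro m
    induction m with
    | zero => simp [opow]
    | succ m ihm =>
      have h1 : opow (c ⊔ d) ((n + 1) + m) ≤ opow c n ⊔ opow d (m + 1) := by
        have : (n + 1) + m = n + (m + 1) := by omega
        rw [this]; exact ihn (m + 1)
      calc opow (c ⊔ d) ((n + 1) + (m + 1))
          = odot (c ⊔ d) (opow (c ⊔ d) ((n + 1) + m)) := by
            have e : (n + 1) + (m + 1) = ((n + 1) + m) + 1 := by omega
            rw [e]; rfl
        _ = odot c (opow (c ⊔ d) ((n + 1) + m)) ⊔ odot d (opow (c ⊔ d) ((n + 1) + m)) :=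
            aux_odot_sup c d _
        _ ≤ odot c (opow c n ⊔ opow d (m + 1)) ⊔ odot d (opow c (n + 1) ⊔ opow d m) :=
            sup_le_sup (aux_odot_mono le_rfl h1) (aux_odot_mono le_rfl ihm)
        _ ≤ opow c (n + 1) ⊔ opow d (m + 1) := by
            apply sup_le
            · rw [aux_sup_odot]
              exact sup_le le_sup_left (le_sup_right.trans' (aux_odot_le_right _ _))
            · rw [aux_sup_odot]
              exact sup_le (le_sup_left.trans' (aux_odot_le_right _ _)) le_sup_right

lemma aux_top_mem {F : Set L} (hF : IsNMFilter F) : (⊤ : L) ∈ F := by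
  obtain ⟨t, ht⟩ := hF.1
  exact hF.2.2 t ht ⊤ le_top

lemma aux_genMF_singleton (hq : IsStrongUQ q) (a : L) :
    genMF q {a} = {x | ∃ n, opow (q a) n ≤ x} := by
  apply subset_antisymm
  · apply Set.sInter_subset_of_mem
    refine ⟨⟨⟨⟨⊤, ⟨0, le_rfl⟩⟩, ?_, ?_⟩, ?_⟩, ?_⟩
    · rintro x ⟨n, hn⟩ y ⟨m, hm⟩
      refine ⟨n + m, ?_⟩
      rw [aux_opow_add]
      exact aux_odot_mono hn hm
    · rintro x ⟨n, hn⟩ y hxy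
      exact ⟨n, hn.trans hxy⟩
    · rintro x ⟨n, hn⟩
      refine ⟨n, ?_⟩
      rw [← aux_q_opow hq a n]
      exact aux_q_mono hq hn
    · rw [Set.singleton_subset_iff]
      refine ⟨1, ?_⟩
      show odot (q a) ⊤ ≤ a
      rw [odot_top]
      exact hq.1 a
  · rintro x ⟨n, hn⟩
    rw [genMF, Set.mem_sInter]
    rintro F ⟨hF, haF⟩
    have haF' : a ∈ F := haF rfl
    have hqa : q a ∈ F := hF.2 a haF'
    have hpow : ∀ k, opow (q a) k ∈ F := by
      intro k
      induction k with
      | zero => exact aux_top_mem hF.1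
      | succ k ih => exact hF.1.2.1 (q a) hqa (opow (q a) k) ih
    exact hF.1.2.2 _ (hpow n) x hn

end Aux

/-- Theorem 4.4 (7): in a strong monadic NM-algebra,
`⟨a⟩_∀ ∩ ⟨b⟩_∀ = ⟨∀a ⊔ ∀b⟩_∀`. -/
theorem strong_monadic_nm_inter_principal_monadic_filters
    {L : Type*} [NMAlgebra L] (q : L → L) (hq : IsStrongUQ q) (a b : L) :
    genMF q {a} ∩ genMF q {b} = genMF q {q a ⊔ q b} := by
  have hfix : q (q a ⊔ q b) = q a ⊔ q b := by
    rw [hq.2.2.2, aux_q_idem hq, aux_q_idem hq]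
  rw [aux_genMF_singleton hq a, aux_genMF_singleton hq b,
    aux_genMF_singleton hq (q a ⊔ q b), hfix]
  ext x
  simp only [Set.mem_inter_iff, Set.mem_setOf_eq]
  constructor
  · rintro ⟨⟨n, hn⟩, ⟨m, hm⟩⟩
    exact ⟨n + m, (aux_sup_opow (q a) (q b) n m).trans (sup_le hn hm)⟩
  · rintro ⟨k, hk⟩
    exact ⟨⟨k, (aux_opow_mono_base le_sup_left k).trans hk⟩,
      ⟨k, (aux_opow_mono_base le_sup_right k).trans hk⟩⟩
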